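/- Free-stream preservation of the mimetic metric terms: for any twice continuously differentiable scalar functions f, g on [−1,1]³, the projected metric vector field p³(curl(f · grad g)) is divergence-free, i.e. ∑_{i=1}^{3} ∂ᵢ [p³(curl(f grad g))]ᵢ = 0; equivalently, p³(curl(f grad g)) = curl(p²(f grad g)) and the divergence of a curl of the (polynomial, hence smooth) field p²(f grad g) vanishes. -/

import Mathlib

open Polynomial MeasureTheory

/-- Partial derivative (within the cube `[-1,1]³`, i.e. one-sided at the boundary) of
`f : ℝ³ → ℝ` in direction `d`. -/
noncomputable def pdOn (d : Fin 3) (f : (Fin 3 → ℝ) → ℝ) (y : Fin 3 → ℝ) : ℝ :=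
  derivWithin (fun s => f (Function.update y d s)) (Set.Icc (-1 : ℝ) 1) (y d)

/-- Gradient (on the cube) of `f : ℝ³ → ℝ`. -/
noncomputable def gradOn (f : (Fin 3 → ℝ) → ℝ) (y : Fin 3 → ℝ) : Fin 3 → ℝ :=
  fun d => pdOn d f y

/-- Curl (on the cube) of a vector field `F : ℝ³ → ℝ³`:
`curl F = (∂₂F₃ - ∂₃F₂, ∂₃F₁ - ∂₁F₃, ∂₁F₂ - ∂₂F₁)`. -/
noncomputable def curlOn (F : (Fin 3 → ℝ) → (Fin 3 → ℝ)) (y : Fin 3 → ℝ) : Fin 3 → ℝ :=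
  ![pdOn 1 (fun z => F z 2) y - pdOn 2 (fun z => F z 1) y,
    pdOn 2 (fun z => F z 0) y - pdOn 0 (fun z => F z 2) y,
    pdOn 0 (fun z => F z 1) y - pdOn 1 (fun z => F z 0) y]

/-- The componentwise tensor-product projection `p²` (histopolation in direction 1 for
component 1, direction 2 for component 2, direction 3 for component 3; Lagrange
interpolation in the remaining directions). -/
noncomputable def P2 {N : ℕ} (ξ : Fin (N + 1) → ℝ) (l : Fin (N + 1) → Polynomial ℝ)
    (h : Fin N → Polynomial ℝ) (F : (Fin 3 → ℝ) → (Fin 3 → ℝ)) (y : Fin 3 → ℝ) :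
    Fin 3 → ℝ :=
  ![∑ i : Fin N, ∑ j : Fin (N + 1), ∑ k : Fin (N + 1),
      (∫ s in (ξ i.castSucc)..(ξ i.succ), F ![s, ξ j, ξ k] 0)
        * (h i).eval (y 0) * (l j).eval (y 1) * (l k).eval (y 2),
    ∑ i : Fin (N + 1), ∑ j : Fin N, ∑ k : Fin (N + 1),
      (∫ s in (ξ j.castSucc)..(ξ j.succ), F ![ξ i, s, ξ k] 1)
        * (l i).eval (y 0) * (h j).eval (y 1) * (l k).eval (y 2),
    ∑ i : Fin (N + 1), ∑ j : Fin (N + 1), ∑ k : Fin N,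
      (∫ s in (ξ k.castSucc)..(ξ k.succ), F ![ξ i, ξ j, s] 2)
        * (l i).eval (y 0) * (l j).eval (y 1) * (h k).eval (y 2)]

/-- The componentwise tensor-product projection `p³` (Lagrange interpolation in direction 1
for component 1, direction 2 for component 2, direction 3 for component 3; histopolation,
i.e. sub-interval integrals with the edge basis, in the remaining two directions). -/
noncomputable def P3 {N : ℕ} (ξ : Fin (N + 1) → ℝ) (l : Fin (N + 1) → Polynomial ℝ)
    (h : Fin N → Polynomial ℝ) (G : (Fin 3 → ℝ) → (Fin 3 → ℝ)) (y : Fin 3 → ℝ) :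
    Fin 3 → ℝ :=
  ![∑ i : Fin (N + 1), ∑ j : Fin N, ∑ k : Fin N,
      (∫ s in (ξ j.castSucc)..(ξ j.succ), ∫ t in (ξ k.castSucc)..(ξ k.succ), G ![ξ i, s, t] 0)
        * (l i).eval (y 0) * (h j).eval (y 1) * (h k).eval (y 2),
    ∑ i : Fin N, ∑ j : Fin (N + 1), ∑ k : Fin N,
      (∫ s in (ξ i.castSucc)..(ξ i.succ), ∫ t in (ξ k.castSucc)..(ξ k.succ), G ![s, ξ j, t] 1)
        * (h i).eval (y 0) * (l j).eval (y 1) * (h k).eval (y 2),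
    ∑ i : Fin N, ∑ j : Fin N, ∑ k : Fin (N + 1),
      (∫ s in (ξ i.castSucc)..(ξ i.succ), ∫ t in (ξ j.castSucc)..(ξ j.succ), G ![s, t, ξ k] 2)
        * (h i).eval (y 0) * (h j).eval (y 1) * (l k).eval (y 2)]

/-! The edge polynomials are built so that differentiation turns nodal interpolation into
histopolation: as `∑ j, l j = 1`, summation by parts gives
`∑ i, (c (i + 1) - c i) • h i = ∑ j, c j • (l j)'`.
A coefficient of `p³ (curl F)` is the integral of a curl component over a face of a cell of the
grid; Green's theorem on that rectangle turns it into differences of edge integrals of `F`, that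
is, of coefficients of `p² F`. Combined with the identity above this gives
`p³ (curl F) = curl (p² F)` componentwise. Finally `p² F` is a tensor-product polynomial, whose
mixed partials commute, so `div (curl (p² F)) = 0`. -/

open Set Function

local notation "𝕀" => Set.Icc (-1 : ℝ) 1
local notation "𝕀³" => Set.Icc (-1 : Fin 3 → ℝ) 1

theorem mem_cube_iff {y : Fin 3 → ℝ} : y ∈ 𝕀³ ↔ ∀ i, y i ∈ 𝕀 := by
  simp only [mem_Icc, Pi.le_def, Pi.neg_apply, Pi.one_apply, forall_and]

theorem uniqueDiffOn_cube : UniqueDiffOn ℝ 𝕀³ := by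
  rw [← pi_univ_Icc]
  exact UniqueDiffOn.pi fun _ _ => uniqueDiffOn_Icc (by norm_num)

theorem update_mem_cube {y : Fin 3 → ℝ} (hy : y ∈ 𝕀³) (d : Fin 3) {s : ℝ} (hs : s ∈ 𝕀) :
    update y d s ∈ 𝕀³ := by
  rw [mem_cube_iff] at hy ⊢
  intro i
  rcases eq_or_ne i d with rfl | hne
  · simpa
  · simpa [update_of_ne hne] using hy i

theorem vec_mem_cube {a b c : ℝ} (ha : a ∈ 𝕀) (hb : b ∈ 𝕀) (hc : c ∈ 𝕀) : ![a, b, c] ∈ 𝕀³ :=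
  mem_cube_iff.2 fun i => by fin_cases i <;> assumption

section pdOn

variable {G : (Fin 3 → ℝ) → ℝ} {y : Fin 3 → ℝ}

theorem hasDerivWithinAt_comp_update (hG : DifferentiableOn ℝ G 𝕀³) (hy : y ∈ 𝕀³) (d : Fin 3)
    {s : ℝ} (hs : s ∈ 𝕀) :
    HasDerivWithinAt (fun t => G (update y d t))
      (fderivWithin ℝ G 𝕀³ (update y d s) (Pi.single d 1)) 𝕀 s :=
  (hG _ (update_mem_cube hy d hs)).hasFDerivWithinAt.comp_hasDerivWithinAt s
    (hasDerivAt_update y d s).hasDerivWithinAt fun _ ht => update_mem_cube hy d ht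

theorem pdOn_eq_fderivWithin (hG : DifferentiableOn ℝ G 𝕀³) (hy : y ∈ 𝕀³) (d : Fin 3) :
    pdOn d G y = fderivWithin ℝ G 𝕀³ y (Pi.single d 1) := by
  have h := hasDerivWithinAt_comp_update hG hy d (mem_cube_iff.1 hy d)
  rw [update_eq_self] at h
  exact h.derivWithin (uniqueDiffOn_Icc (by norm_num) _ (mem_cube_iff.1 hy d))

theorem hasDerivWithinAt_pdOn (hG : DifferentiableOn ℝ G 𝕀³) (hy : y ∈ 𝕀³) (d : Fin 3)
    {s : ℝ} (hs : s ∈ 𝕀) :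
    HasDerivWithinAt (fun t => G (update y d t)) (pdOn d G (update y d s)) 𝕀 s := by
  rw [pdOn_eq_fderivWithin hG (update_mem_cube hy d hs)]
  exact hasDerivWithinAt_comp_update hG hy d hs

theorem ContDiffOn.pdOn {m n : WithTop ℕ∞} (hG : ContDiffOn ℝ m G 𝕀³) (hmn : n + 1 ≤ m)
    (d : Fin 3) : ContDiffOn ℝ n (pdOn d G) 𝕀³ :=
  ((hG.fderivWithin uniqueDiffOn_cube hmn).clm_apply contDiffOn_const).congr fun _ hy =>
    pdOn_eq_fderivWithin ((hG.of_le (le_add_self.trans hmn)).differentiableOn one_ne_zero) hy d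

theorem pdOn_eq_of_hasDerivAt {d : Fin 3} (hy : y d ∈ 𝕀) {v : ℝ}
    (h : HasDerivAt (fun s => G (update y d s)) v (y d)) : pdOn d G y = v :=
  h.hasDerivWithinAt.derivWithin (uniqueDiffOn_Icc (by norm_num) _ hy)

theorem pdOn_congr_cube {H : (Fin 3 → ℝ) → ℝ} {d : Fin 3} (hy : y ∈ 𝕀³)
    (h : EqOn G H 𝕀³) : pdOn d G y = pdOn d H y :=
  derivWithin_congr (fun _ hs => h (update_mem_cube hy d hs)) (by rw [update_eq_self]; exact h hy)

end pdOn

section Rectangle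

variable {a b c d : ℝ}

theorem integral_eq_sub_of_hasDerivWithinAt_Icc {f f' : ℝ → ℝ} (hab : a ≤ b)
    (hf : ∀ x ∈ Icc a b, HasDerivWithinAt f (f' x) (Icc a b) x)
    (hf' : ContinuousOn f' (Icc a b)) :
    ∫ x in a..b, f' x = f b - f a :=
  intervalIntegral.integral_eq_sub_of_hasDeriv_right_of_le hab
    (fun x hx => (hf x hx).continuousWithinAt)
    (fun x hx => ((hf x (Ioo_subset_Icc_self hx)).hasDerivAt
      (Icc_mem_nhds hx.1 hx.2)).hasDerivWithinAt)
    (hf'.intervalIntegrable_of_Icc hab)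

variable {X : ℝ → ℝ → ℝ}

theorem integrableOn_uIoc_prod_of_continuousOn (hab : a ≤ b) (hcd : c ≤ d)
    (hX : ContinuousOn (uncurry X) (Icc a b ×ˢ Icc c d)) :
    IntegrableOn (uncurry X) (uIoc a b ×ˢ uIoc c d) := by
  rw [uIoc_of_le hab, uIoc_of_le hcd]
  exact (hX.integrableOn_compact (isCompact_Icc.prod isCompact_Icc)).mono_set
    (prod_mono Ioc_subset_Icc_self Ioc_subset_Icc_self)

theorem intervalIntegrable_intervalIntegral_of_continuousOn (hab : a ≤ b) (hcd : c ≤ d)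
    (hX : ContinuousOn (uncurry X) (Icc a b ×ˢ Icc c d)) :
    IntervalIntegrable (fun s => ∫ t in c..d, X s t) volume a b := by
  have hint := integrableOn_uIoc_prod_of_continuousOn hab hcd hX
  rw [IntegrableOn, Measure.volume_eq_prod, ← Measure.prod_restrict] at hint
  rw [intervalIntegrable_iff, IntegrableOn]
  simp only [intervalIntegral.integral_of_le hcd, ← uIoc_of_le hcd]
  exact hint.integral_prod_left

theorem integral_integral_sub_eq_of_hasDerivWithinAt {φ ψ φ' ψ' : ℝ → ℝ → ℝ}
    (hab : a ≤ b) (hcd : c ≤ d)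
    (hφ : ∀ s ∈ Icc a b, ∀ t ∈ Icc c d, HasDerivWithinAt (φ · t) (φ' s t) (Icc a b) s)
    (hψ : ∀ s ∈ Icc a b, ∀ t ∈ Icc c d, HasDerivWithinAt (ψ s) (ψ' s t) (Icc c d) t)
    (hφc : ContinuousOn (uncurry φ) (Icc a b ×ˢ Icc c d))
    (hψc : ContinuousOn (uncurry ψ) (Icc a b ×ˢ Icc c d))
    (hφ'c : ContinuousOn (uncurry φ') (Icc a b ×ˢ Icc c d))
    (hψ'c : ContinuousOn (uncurry ψ') (Icc a b ×ˢ Icc c d)) :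
    ∫ s in a..b, ∫ t in c..d, (φ' s t - ψ' s t) =
      ((∫ t in c..d, φ b t) - ∫ t in c..d, φ a t) -
        ((∫ s in a..b, ψ s d) - ∫ s in a..b, ψ s c) := by
  have ha : a ∈ Icc a b := left_mem_Icc.2 hab
  have hb : b ∈ Icc a b := right_mem_Icc.2 hab
  have hc : c ∈ Icc c d := left_mem_Icc.2 hcd
  have hd : d ∈ Icc c d := right_mem_Icc.2 hcd
  have inner : ∀ s ∈ uIcc a b, ∫ t in c..d, (φ' s t - ψ' s t) =
      (∫ t in c..d, φ' s t) - (ψ s d - ψ s c) := by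
    intro s hs
    rw [uIcc_of_le hab] at hs
    rw [intervalIntegral.integral_sub
        ((hφ'c.uncurry_left s hs).intervalIntegrable_of_Icc hcd)
        ((hψ'c.uncurry_left s hs).intervalIntegrable_of_Icc hcd),
      integral_eq_sub_of_hasDerivWithinAt_Icc hcd (hψ s hs) (hψ'c.uncurry_left s hs)]
  have swapped : ∫ s in a..b, ∫ t in c..d, φ' s t = ∫ t in c..d, (φ b t - φ a t) := by
    rw [intervalIntegral_intervalIntegral_swap
      (integrableOn_uIoc_prod_of_continuousOn hab hcd hφ'c)]
    refine intervalIntegral.integral_congr fun t ht => ?_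
    rw [uIcc_of_le hcd] at ht
    exact integral_eq_sub_of_hasDerivWithinAt_Icc hab (fun s hs => hφ s hs t ht)
      (hφ'c.uncurry_right t ht)
  have hψd_int := (hψc.uncurry_right d hd).intervalIntegrable_of_Icc (μ := volume) hab
  have hψc_int := (hψc.uncurry_right c hc).intervalIntegrable_of_Icc (μ := volume) hab
  rw [intervalIntegral.integral_congr inner, intervalIntegral.integral_sub
      (intervalIntegrable_intervalIntegral_of_continuousOn hab hcd hφ'c) (hψd_int.sub hψc_int),
    swapped, intervalIntegral.integral_sub
      ((hφc.uncurry_left b hb).intervalIntegrable_of_Icc hcd)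
      ((hφc.uncurry_left a ha).intervalIntegrable_of_Icc hcd),
    intervalIntegral.integral_sub hψd_int hψc_int]

end Rectangle

section Faces

variable {G H : (Fin 3 → ℝ) → ℝ} {a b c d : ℝ}

theorem integral_integral_pdOn_sub_pdOn (hG : ContDiffOn ℝ 1 G 𝕀³) (hH : ContDiffOn ℝ 1 H 𝕀³)
    {e : ℝ → ℝ → Fin 3 → ℝ} (he : Continuous (uncurry e))
    (hmem : ∀ s ∈ 𝕀, ∀ t ∈ 𝕀, e s t ∈ 𝕀³) {p q : Fin 3}
    (hp : ∀ s t u, update (e s t) p u = e u t) (hq : ∀ s t u, update (e s t) q u = e s u)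
    (ha : -1 ≤ a) (hab : a ≤ b) (hb : b ≤ 1) (hc : -1 ≤ c) (hcd : c ≤ d) (hd : d ≤ 1) :
    ∫ s in a..b, ∫ t in c..d, (pdOn p G (e s t) - pdOn q H (e s t)) =
      ((∫ t in c..d, G (e b t)) - ∫ t in c..d, G (e a t)) -
        ((∫ s in a..b, H (e s d)) - ∫ s in a..b, H (e s c)) := by
  have hsub₁ : Icc a b ⊆ 𝕀 := Icc_subset_Icc ha hb
  have hsub₂ : Icc c d ⊆ 𝕀 := Icc_subset_Icc hc hd
  have hmaps : MapsTo (uncurry e) (Icc a b ×ˢ Icc c d) 𝕀³ :=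
    fun x hx => hmem _ (hsub₁ hx.1) _ (hsub₂ hx.2)
  have hcomp : ∀ {K : (Fin 3 → ℝ) → ℝ}, ContinuousOn K 𝕀³ →
      ContinuousOn (uncurry fun s t => K (e s t)) (Icc a b ×ˢ Icc c d) :=
    fun hK => hK.comp he.continuousOn hmaps
  refine integral_integral_sub_eq_of_hasDerivWithinAt hab hcd (fun s hs t ht => ?_)
    (fun s hs t ht => ?_) (hcomp hG.continuousOn) (hcomp hH.continuousOn)
    (hcomp (hG.pdOn (n := 0) (by simp) p).continuousOn)
    (hcomp (hH.pdOn (n := 0) (by simp) q).continuousOn)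
  · have h := hasDerivWithinAt_pdOn (hG.differentiableOn one_ne_zero)
      (hmem s (hsub₁ hs) t (hsub₂ ht)) p (hsub₁ hs)
    simp only [hp] at h
    exact h.mono hsub₁
  · have h := hasDerivWithinAt_pdOn (hH.differentiableOn one_ne_zero)
      (hmem s (hsub₁ hs) t (hsub₂ ht)) q (hsub₂ ht)
    simp only [hq] at h
    exact h.mono hsub₂

end Faces

section CurlFaces

variable {F : (Fin 3 → ℝ) → Fin 3 → ℝ} (hF : ∀ d, ContDiffOn ℝ 1 (F · d) 𝕀³)
  {x a b c d : ℝ} (hx : x ∈ 𝕀) (ha : -1 ≤ a) (hab : a ≤ b) (hb : b ≤ 1)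
  (hc : -1 ≤ c) (hcd : c ≤ d) (hd : d ≤ 1)
include hF hx ha hab hb hc hcd hd

theorem integral_integral_curlOn_zero :
    ∫ s in a..b, ∫ t in c..d, curlOn F ![x, s, t] 0 =
      ((∫ t in c..d, F ![x, b, t] 2) - ∫ t in c..d, F ![x, a, t] 2) -
        ((∫ s in a..b, F ![x, s, d] 1) - ∫ s in a..b, F ![x, s, c] 1) :=
  integral_integral_pdOn_sub_pdOn (hF 2) (hF 1) (e := fun s t => ![x, s, t]) (by fun_prop)
    (fun _ hs _ ht => vec_mem_cube hx hs ht) (fun _ _ _ => by ext i; fin_cases i <;> rfl)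
    (fun _ _ _ => by ext i; fin_cases i <;> rfl) ha hab hb hc hcd hd

theorem integral_integral_curlOn_one :
    ∫ s in a..b, ∫ t in c..d, curlOn F ![s, x, t] 1 =
      ((∫ s in a..b, F ![s, x, d] 0) - ∫ s in a..b, F ![s, x, c] 0) -
        ((∫ t in c..d, F ![b, x, t] 2) - ∫ t in c..d, F ![a, x, t] 2) := by
  have green := integral_integral_pdOn_sub_pdOn (hF 2) (hF 0) (e := fun s t => ![s, x, t])
    (p := 0) (q := 2) (by fun_prop) (fun _ hs _ ht => vec_mem_cube hs hx ht)
    (fun _ _ _ => by ext i; fin_cases i <;> rfl) (fun _ _ _ => by ext i; fin_cases i <;> rfl)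
    ha hab hb hc hcd hd
  calc _ = -∫ s in a..b, ∫ t in c..d,
        (pdOn 0 (F · 2) ![s, x, t] - pdOn 2 (F · 0) ![s, x, t]) := by
        simp only [← intervalIntegral.integral_neg, neg_sub]
        rfl
    _ = _ := by rw [green]; ring

theorem integral_integral_curlOn_two :
    ∫ s in a..b, ∫ t in c..d, curlOn F ![s, t, x] 2 =
      ((∫ t in c..d, F ![b, t, x] 1) - ∫ t in c..d, F ![a, t, x] 1) -
        ((∫ s in a..b, F ![s, d, x] 0) - ∫ s in a..b, F ![s, c, x] 0) :=
  integral_integral_pdOn_sub_pdOn (hF 1) (hF 0) (e := fun s t => ![s, t, x]) (by fun_prop)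
    (fun _ hs _ ht => vec_mem_cube hs ht hx) (fun _ _ _ => by ext i; fin_cases i <;> rfl)
    (fun _ _ _ => by ext i; fin_cases i <;> rfl) ha hab hb hc hcd hd

end CurlFaces

theorem Fin.sum_forwardDiff_smul_partialSum {R M : Type*} [Ring R] [AddCommGroup M]
    [Module R M] {N : ℕ} (c : Fin (N + 1) → R) (e : Fin (N + 1) → M) :
    ∑ i : Fin N, (c i.succ - c i.castSucc) •
        ∑ m : Fin (N + 1), (if (m : ℕ) < i + 1 then e m else 0) =
      c (Fin.last N) • ∑ m, e m - ∑ m, c m • e m := by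
  set c' : ℕ → R := fun n => if h : n < N + 1 then c ⟨n, h⟩ else 0
  set e' : ℕ → M := fun n => if h : n < N + 1 then e ⟨n, h⟩ else 0
  have hc : ∀ m : Fin (N + 1), c m = c' m := fun m => by simp only [c', dif_pos m.is_lt]
  have he : ∀ m : Fin (N + 1), e m = e' m := fun m => by simp only [e', dif_pos m.is_lt]
  have hpartial : ∀ k ≤ N + 1,
      ∑ m : Fin (N + 1), (if (m : ℕ) < k then e m else 0) = ∑ n ∈ Finset.range k, e' n := by
    intro k hk
    simp only [he]
    rw [Fin.sum_univ_eq_sum_range (fun n => if n < k then e' n else 0), ← Finset.sum_filter,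
      Finset.range_eq_Ico, Finset.Ico_filter_lt, min_eq_right hk, ← Finset.range_eq_Ico]
  have hlast : ∑ m, e m = ∑ n ∈ Finset.range (N + 1), e' n :=
    (Finset.sum_congr rfl fun m _ => (if_pos m.is_lt).symm).trans (hpartial _ le_rfl)
  have hdiag : ∑ m, c m • e m = ∑ n ∈ Finset.range (N + 1), c' n • e' n := by
    simp only [hc, he]
    exact Fin.sum_univ_eq_sum_range (fun n => c' n • e' n) _
  have hdiff : ∑ i : Fin N, (c i.succ - c i.castSucc) •
        ∑ m : Fin (N + 1), (if (m : ℕ) < i + 1 then e m else 0) =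
      ∑ n ∈ Finset.range N, (c' (n + 1) - c' n) • ∑ m ∈ Finset.range (n + 1), e' m := by
    refine (Finset.sum_congr rfl fun i _ => ?_).trans (Fin.sum_univ_eq_sum_range
      (fun n => (c' (n + 1) - c' n) • ∑ m ∈ Finset.range (n + 1), e' m) N)
    rw [hpartial _ (by omega), hc, hc, Fin.val_succ, Fin.val_castSucc]
  have by_parts := Finset.sum_range_by_parts c' e' (N + 1)
  rw [Nat.add_sub_cancel] at by_parts
  rw [hdiff, hlast, hdiag, by_parts, hc (Fin.last N), Fin.val_last]
  abel

section EdgeBasis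

variable {N : ℕ}

theorem sum_eq_one_of_eval_eq_ite {ξ : Fin (N + 1) → ℝ} {l : Fin (N + 1) → ℝ[X]}
    (hξ : Injective ξ) (hdeg : ∀ i, (l i).natDegree ≤ N)
    (hlag : ∀ i j, (l i).eval (ξ j) = if i = j then 1 else 0) :
    ∑ i, l i = 1 := by
  refine sub_eq_zero.1 (eq_zero_of_natDegree_lt_card_of_eval_eq_zero _ hξ (fun j => ?_) ?_)
  · simp [eval_finsetSum, hlag]
  · calc (∑ i, l i - 1).natDegree ≤ max (∑ i, l i).natDegree (1 : ℝ[X]).natDegree :=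
          natDegree_sub_le _ _
      _ ≤ N := max_le (natDegree_sum_le_of_forall_le _ _ fun i _ => hdeg i) (by simp)
      _ < Fintype.card (Fin (N + 1)) := by simp

theorem sum_forwardDiff_smul_eq_sum_smul_derivative {l : Fin (N + 1) → ℝ[X]}
    (hsum : ∑ i, l i = 1) {h : Fin N → ℝ[X]}
    (hdef : ∀ i : Fin N,
      h i = -∑ j : Fin (N + 1), if (j : ℕ) < (i : ℕ) + 1 then derivative (l j) else 0)
    (c : Fin (N + 1) → ℝ) :
    ∑ i, (c i.succ - c i.castSucc) • h i = ∑ j, c j • derivative (l j) := by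
  have hderiv : ∑ j, derivative (l j) = 0 := by rw [← map_sum, hsum, derivative_one]
  simp only [hdef, smul_neg, Finset.sum_neg_distrib, Fin.sum_forwardDiff_smul_partialSum, hderiv,
    smul_zero, zero_sub, neg_neg]

end EdgeBasis

section TensorEval

variable {ι₁ ι₂ ι₃ : Type*} [Fintype ι₁] [Fintype ι₂] [Fintype ι₃]

noncomputable def tensorEval (c : ι₁ → ι₂ → ι₃ → ℝ) (p : ι₁ → ℝ[X]) (q : ι₂ → ℝ[X])
    (r : ι₃ → ℝ[X]) (y : Fin 3 → ℝ) : ℝ :=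
  ∑ i, ∑ j, ∑ k, c i j k * (p i).eval (y 0) * (q j).eval (y 1) * (r k).eval (y 2)

variable (c : ι₁ → ι₂ → ι₃ → ℝ) (p : ι₁ → ℝ[X]) (q : ι₂ → ℝ[X]) (r : ι₃ → ℝ[X])
  (y : Fin 3 → ℝ)

theorem hasDerivAt_tensorEval_update_zero :
    HasDerivAt (fun s => tensorEval c p q r (update y 0 s))
      (tensorEval c (derivative ∘ p) q r y) (y 0) := by
  simp only [tensorEval, update_self, update_of_ne (show (1 : Fin 3) ≠ 0 by decide),
    update_of_ne (show (2 : Fin 3) ≠ 0 by decide)]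
  exact HasDerivAt.fun_sum fun i _ => HasDerivAt.fun_sum fun j _ => HasDerivAt.fun_sum fun k _ =>
    ((((p i).hasDerivAt _).const_mul _).mul_const _).mul_const _

theorem hasDerivAt_tensorEval_update_one :
    HasDerivAt (fun s => tensorEval c p q r (update y 1 s))
      (tensorEval c p (derivative ∘ q) r y) (y 1) := by
  simp only [tensorEval, update_self, update_of_ne (show (0 : Fin 3) ≠ 1 by decide),
    update_of_ne (show (2 : Fin 3) ≠ 1 by decide)]
  exact HasDerivAt.fun_sum fun i _ => HasDerivAt.fun_sum fun j _ => HasDerivAt.fun_sum fun k _ =>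
    (((q j).hasDerivAt _).const_mul _).mul_const _

theorem hasDerivAt_tensorEval_update_two :
    HasDerivAt (fun s => tensorEval c p q r (update y 2 s))
      (tensorEval c p q (derivative ∘ r) y) (y 2) := by
  simp only [tensorEval, update_self, update_of_ne (show (0 : Fin 3) ≠ 2 by decide),
    update_of_ne (show (1 : Fin 3) ≠ 2 by decide)]
  exact HasDerivAt.fun_sum fun i _ => HasDerivAt.fun_sum fun j _ => HasDerivAt.fun_sum fun k _ =>
    ((r k).hasDerivAt _).const_mul _

theorem tensorEval_sub (c' : ι₁ → ι₂ → ι₃ → ℝ) :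
    tensorEval (fun i j k => c i j k - c' i j k) p q r y =
      tensorEval c p q r y - tensorEval c' p q r y := by
  simp only [tensorEval, sub_mul, Finset.sum_sub_distrib]

end TensorEval

section Histopolation

variable {N : ℕ} {ι₁ ι₂ ι₃ : Type*} [Fintype ι₁] [Fintype ι₂] [Fintype ι₃]
  {e : Fin N → ℝ[X]} {v : Fin (N + 1) → ℝ[X]}
  (hev : ∀ c : Fin (N + 1) → ℝ, ∑ i, (c i.succ - c i.castSucc) • e i = ∑ j, c j • v j)
include hev

theorem sum_forwardDiff_mul_eval (c : Fin (N + 1) → ℝ) (u : ℝ) :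
    ∑ i, (c i.succ - c i.castSucc) * (e i).eval u = ∑ j, c j * (v j).eval u := by
  simpa [eval_finsetSum] using congrArg (Polynomial.eval u) (hev c)

theorem tensorEval_forwardDiff_zero (c : Fin (N + 1) → ι₂ → ι₃ → ℝ) (q : ι₂ → ℝ[X])
    (r : ι₃ → ℝ[X]) (y : Fin 3 → ℝ) :
    tensorEval (fun i j k => c i.succ j k - c i.castSucc j k) e q r y = tensorEval c v q r y := by
  simp only [tensorEval]
  rw [Finset.sum_comm]; conv_rhs => rw [Finset.sum_comm]
  refine Finset.sum_congr rfl fun j _ => ?_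
  rw [Finset.sum_comm]; conv_rhs => rw [Finset.sum_comm]
  refine Finset.sum_congr rfl fun k _ => ?_
  simp only [← Finset.sum_mul]
  rw [sum_forwardDiff_mul_eval hev (fun i => c i j k)]

theorem tensorEval_forwardDiff_one (c : ι₁ → Fin (N + 1) → ι₃ → ℝ) (p : ι₁ → ℝ[X])
    (r : ι₃ → ℝ[X]) (y : Fin 3 → ℝ) :
    tensorEval (fun i j k => c i j.succ k - c i j.castSucc k) p e r y = tensorEval c p v r y := by
  simp only [tensorEval]
  refine Finset.sum_congr rfl fun i _ => ?_
  rw [Finset.sum_comm]; conv_rhs => rw [Finset.sum_comm]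
  refine Finset.sum_congr rfl fun k _ => ?_
  calc _ = (∑ j, (c i j.succ k - c i j.castSucc k) * (e j).eval (y 1)) *
        ((p i).eval (y 0) * (r k).eval (y 2)) := by
        rw [Finset.sum_mul]; exact Finset.sum_congr rfl fun _ _ => by ring
    _ = _ := by
        rw [sum_forwardDiff_mul_eval hev (fun j => c i j k), Finset.sum_mul]
        exact Finset.sum_congr rfl fun _ _ => by ring

theorem tensorEval_forwardDiff_two (c : ι₁ → ι₂ → Fin (N + 1) → ℝ) (p : ι₁ → ℝ[X])
    (q : ι₂ → ℝ[X]) (y : Fin 3 → ℝ) :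
    tensorEval (fun i j k => c i j k.succ - c i j k.castSucc) p q e y = tensorEval c p q v y := by
  simp only [tensorEval]
  refine Finset.sum_congr rfl fun i _ => Finset.sum_congr rfl fun j _ => ?_
  calc _ = (∑ k, (c i j k.succ - c i j k.castSucc) * (e k).eval (y 2)) *
        ((p i).eval (y 0) * (q j).eval (y 1)) := by
        rw [Finset.sum_mul]; exact Finset.sum_congr rfl fun _ _ => by ring
    _ = _ := by
        rw [sum_forwardDiff_mul_eval hev (c i j), Finset.sum_mul]
        exact Finset.sum_congr rfl fun _ _ => by ring

end Histopolation

section Projections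

variable {N : ℕ} (ξ : Fin (N + 1) → ℝ) (l : Fin (N + 1) → ℝ[X]) (h : Fin N → ℝ[X])
  (F : (Fin 3 → ℝ) → Fin 3 → ℝ)

noncomputable def p2Coeff₀ (i : Fin N) (j k : Fin (N + 1)) : ℝ :=
  ∫ s in (ξ i.castSucc)..(ξ i.succ), F ![s, ξ j, ξ k] 0

noncomputable def p2Coeff₁ (i : Fin (N + 1)) (j : Fin N) (k : Fin (N + 1)) : ℝ :=
  ∫ s in (ξ j.castSucc)..(ξ j.succ), F ![ξ i, s, ξ k] 1

noncomputable def p2Coeff₂ (i j : Fin (N + 1)) (k : Fin N) : ℝ :=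
  ∫ s in (ξ k.castSucc)..(ξ k.succ), F ![ξ i, ξ j, s] 2

theorem P3_eq_tensorEval (G : (Fin 3 → ℝ) → Fin 3 → ℝ) (y : Fin 3 → ℝ) :
    P3 ξ l h G y =
      ![tensorEval (fun i j k => ∫ s in (ξ j.castSucc)..(ξ j.succ),
          ∫ t in (ξ k.castSucc)..(ξ k.succ), G ![ξ i, s, t] 0) l h h y,
        tensorEval (fun i j k => ∫ s in (ξ i.castSucc)..(ξ i.succ),
          ∫ t in (ξ k.castSucc)..(ξ k.succ), G ![s, ξ j, t] 1) h l h y,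
        tensorEval (fun i j k => ∫ s in (ξ i.castSucc)..(ξ i.succ),
          ∫ t in (ξ j.castSucc)..(ξ j.succ), G ![s, t, ξ k] 2) h h l y] :=
  rfl

theorem curlOn_P2 {y : Fin 3 → ℝ} (hy : y ∈ 𝕀³) :
    curlOn (P2 ξ l h F) y =
      ![tensorEval (p2Coeff₂ ξ F) l (derivative ∘ l) h y -
          tensorEval (p2Coeff₁ ξ F) l h (derivative ∘ l) y,
        tensorEval (p2Coeff₀ ξ F) h l (derivative ∘ l) y -
          tensorEval (p2Coeff₂ ξ F) (derivative ∘ l) l h y,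
        tensorEval (p2Coeff₁ ξ F) (derivative ∘ l) h l y -
          tensorEval (p2Coeff₀ ξ F) h (derivative ∘ l) l y] := by
  have hy' := mem_cube_iff.1 hy
  ext d
  fin_cases d
  · exact congr_arg₂ (· - ·)
      (pdOn_eq_of_hasDerivAt (hy' 1) (hasDerivAt_tensorEval_update_one (p2Coeff₂ ξ F) l l h y))
      (pdOn_eq_of_hasDerivAt (hy' 2) (hasDerivAt_tensorEval_update_two (p2Coeff₁ ξ F) l h l y))
  · exact congr_arg₂ (· - ·)
      (pdOn_eq_of_hasDerivAt (hy' 2) (hasDerivAt_tensorEval_update_two (p2Coeff₀ ξ F) h l l y))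
      (pdOn_eq_of_hasDerivAt (hy' 0) (hasDerivAt_tensorEval_update_zero (p2Coeff₂ ξ F) l l h y))
  · exact congr_arg₂ (· - ·)
      (pdOn_eq_of_hasDerivAt (hy' 0) (hasDerivAt_tensorEval_update_zero (p2Coeff₁ ξ F) l h l y))
      (pdOn_eq_of_hasDerivAt (hy' 1) (hasDerivAt_tensorEval_update_one (p2Coeff₀ ξ F) h l l y))

theorem sum_pdOn_curlOn_P2 {y : Fin 3 → ℝ} (hy : y ∈ 𝕀³) :
    ∑ d, pdOn d (fun z => curlOn (P2 ξ l h F) z d) y = 0 := by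
  have hy' := mem_cube_iff.1 hy
  have e₀ := (pdOn_congr_cube hy fun z hz => congrFun (curlOn_P2 ξ l h F hz) 0).trans
    (pdOn_eq_of_hasDerivAt (hy' 0) ((hasDerivAt_tensorEval_update_zero _ _ _ _ y).sub
      (hasDerivAt_tensorEval_update_zero _ _ _ _ y)))
  have e₁ := (pdOn_congr_cube hy fun z hz => congrFun (curlOn_P2 ξ l h F hz) 1).trans
    (pdOn_eq_of_hasDerivAt (hy' 1) ((hasDerivAt_tensorEval_update_one _ _ _ _ y).sub
      (hasDerivAt_tensorEval_update_one _ _ _ _ y)))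
  have e₂ := (pdOn_congr_cube hy fun z hz => congrFun (curlOn_P2 ξ l h F hz) 2).trans
    (pdOn_eq_of_hasDerivAt (hy' 2) ((hasDerivAt_tensorEval_update_two _ _ _ _ y).sub
      (hasDerivAt_tensorEval_update_two _ _ _ _ y)))
  rw [Fin.sum_univ_three, e₀, e₁, e₂]
  ring

end Projections

theorem P3_curlOn_eq_curlOn_P2 {N : ℕ} {ξ : Fin (N + 1) → ℝ} (hξ : ∀ i, ξ i ∈ 𝕀)
    (hmono : Monotone ξ) {l : Fin (N + 1) → ℝ[X]} {h : Fin N → ℝ[X]}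
    (hev : ∀ c : Fin (N + 1) → ℝ,
      ∑ i, (c i.succ - c i.castSucc) • h i = ∑ j, c j • (derivative ∘ l) j)
    {F : (Fin 3 → ℝ) → Fin 3 → ℝ} (hF : ∀ d, ContDiffOn ℝ 1 (F · d) 𝕀³)
    {y : Fin 3 → ℝ} (hy : y ∈ 𝕀³) :
    P3 ξ l h (curlOn F) y = curlOn (P2 ξ l h F) y := by
  have hcell : ∀ i : Fin N, ξ i.castSucc ≤ ξ i.succ := fun i => hmono (Fin.castSucc_le_succ i)
  rw [P3_eq_tensorEval, curlOn_P2 ξ l h F hy]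
  refine congrArg₂ Matrix.vecCons ?_ (congrArg₂ Matrix.vecCons ?_ (congrArg₂ Matrix.vecCons ?_ rfl))
  · rw [← tensorEval_forwardDiff_one hev, ← tensorEval_forwardDiff_two hev, ← tensorEval_sub]
    congr
    ext i j k
    exact integral_integral_curlOn_zero hF (hξ i) (hξ _).1 (hcell j) (hξ _).2 (hξ _).1 (hcell k)
      (hξ _).2
  · rw [← tensorEval_forwardDiff_two hev, ← tensorEval_forwardDiff_zero hev, ← tensorEval_sub]
    congr
    ext i j k
    exact integral_integral_curlOn_one hF (hξ j) (hξ _).1 (hcell i) (hξ _).2 (hξ _).1 (hcell k)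
      (hξ _).2
  · rw [← tensorEval_forwardDiff_zero hev, ← tensorEval_forwardDiff_one hev, ← tensorEval_sub]
    congr
    ext i j k
    exact integral_integral_curlOn_two hF (hξ k) (hξ _).1 (hcell i) (hξ _).2 (hξ _).1 (hcell j)
      (hξ _).2

theorem contDiffOn_smul_gradOn_apply {f g : (Fin 3 → ℝ) → ℝ} (hf : ContDiffOn ℝ 2 f 𝕀³)
    (hg : ContDiffOn ℝ 2 g 𝕀³) (d : Fin 3) :
    ContDiffOn ℝ 1 (fun w => (f w • gradOn g w) d) 𝕀³ :=
  (hf.of_le one_le_two).mul (hg.pdOn (by norm_num) d)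

theorem mimetic_metric_terms_free_stream_general
    (N : ℕ) (ξ : Fin (N + 1) → ℝ)
    (hmono : StrictMono ξ) (hfirst : ξ 0 = -1) (hlast : ξ (Fin.last N) = 1)
    (l : Fin (N + 1) → Polynomial ℝ)
    (hdeg : ∀ i, (l i).natDegree ≤ N)
    (hlag : ∀ i j, (l i).eval (ξ j) = if i = j then 1 else 0)
    (h : Fin N → Polynomial ℝ)
    (hdef : ∀ i : Fin N,
      h i = -∑ j : Fin (N + 1), if (j : ℕ) < (i : ℕ) + 1 then derivative (l j) else 0)
    (f g : (Fin 3 → ℝ) → ℝ)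
    (hf : ContDiffOn ℝ 2 f (Set.Icc (-1 : Fin 3 → ℝ) 1))
    (hg : ContDiffOn ℝ 2 g (Set.Icc (-1 : Fin 3 → ℝ) 1)) :
    (∀ y ∈ Set.Icc (-1 : Fin 3 → ℝ) 1,
      (∑ d : Fin 3,
        pdOn d (fun z => P3 ξ l h (curlOn (fun w => f w • gradOn g w)) z d) y) = 0) ∧
    (∀ y ∈ Set.Icc (-1 : Fin 3 → ℝ) 1,
      P3 ξ l h (curlOn (fun w => f w • gradOn g w)) y
        = curlOn (fun z => P2 ξ l h (fun w => f w • gradOn g w) z) y) ∧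
    (∀ y ∈ Set.Icc (-1 : Fin 3 → ℝ) 1,
      (∑ d : Fin 3,
        pdOn d (fun z => curlOn (fun w => P2 ξ l h (fun v => f v • gradOn g v) w) z d) y)
          = 0) := by
  have hξ : ∀ i, ξ i ∈ 𝕀 := fun i =>
    ⟨hfirst ▸ hmono.monotone (Fin.zero_le i), hlast ▸ hmono.monotone (Fin.le_last i)⟩
  have hev := sum_forwardDiff_smul_eq_sum_smul_derivative
    (sum_eq_one_of_eval_eq_ite hmono.injective hdeg hlag) hdef
  have hcommute : ∀ y ∈ 𝕀³, P3 ξ l h (curlOn (fun w => f w • gradOn g w)) y =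
      curlOn (P2 ξ l h (fun w => f w • gradOn g w)) y := fun y hy =>
    P3_curlOn_eq_curlOn_P2 hξ hmono.monotone hev (contDiffOn_smul_gradOn_apply hf hg) hy
  refine ⟨fun y hy => ?_, hcommute, fun y hy => sum_pdOn_curlOn_P2 ξ l h _ hy⟩
  rw [← sum_pdOn_curlOn_P2 ξ l h _ hy]
  exact Finset.sum_congr rfl fun d _ => pdOn_congr_cube hy fun z hz => congrFun (hcommute z hz) d

/-- Free-stream preservation of the mimetic metric terms: for any twice
continuously differentiable scalar functions `f, g` on `[-1,1]³`, the projected metric field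
`p³(curl (f grad g))` is divergence-free; equivalently,
`p³(curl (f grad g)) = curl (p²(f grad g))` and the divergence of the curl of the
(polynomial, hence smooth) field `p²(f grad g)` vanishes. -/
theorem mimetic_metric_terms_free_stream
    (N : ℕ) (hN : 1 ≤ N) (ξ : Fin (N + 1) → ℝ)
    (hmono : StrictMono ξ) (hfirst : ξ 0 = -1) (hlast : ξ (Fin.last N) = 1)
    (l : Fin (N + 1) → Polynomial ℝ)
    (hdeg : ∀ i, (l i).natDegree ≤ N)
    (hlag : ∀ i j, (l i).eval (ξ j) = if i = j then 1 else 0)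
    (h : Fin N → Polynomial ℝ)
    (hdef : ∀ i : Fin N,
      h i = -∑ j : Fin (N + 1), if (j : ℕ) < (i : ℕ) + 1 then derivative (l j) else 0)
    (f g : (Fin 3 → ℝ) → ℝ)
    (hf : ContDiffOn ℝ 2 f (Set.Icc (-1 : Fin 3 → ℝ) 1))
    (hg : ContDiffOn ℝ 2 g (Set.Icc (-1 : Fin 3 → ℝ) 1)) :
    (∀ y ∈ Set.Icc (-1 : Fin 3 → ℝ) 1,
      (∑ d : Fin 3,
        pdOn d (fun z => P3 ξ l h (curlOn (fun w => f w • gradOn g w)) z d) y) = 0) ∧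
    (∀ y ∈ Set.Icc (-1 : Fin 3 → ℝ) 1,
      P3 ξ l h (curlOn (fun w => f w • gradOn g w)) y
        = curlOn (fun z => P2 ξ l h (fun w => f w • gradOn g w) z) y) ∧
    (∀ y ∈ Set.Icc (-1 : Fin 3 → ℝ) 1,
      (∑ d : Fin 3,
        pdOn d (fun z => curlOn (fun w => P2 ξ l h (fun v => f v • gradOn g v) w) z d) y)
          = 0) :=
  mimetic_metric_terms_free_stream_general N ξ hmono hfirst hlast l hdeg hlag h hdef f g hf hg
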